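/- arXiv:2506.09767 — 3 statements merged into one kernel-verified Lean document; each statement's English description precedes it below -/
import Mathlib

section
/- Let k ≥ 5 and let G be a C_k-saturated graph with at least 3 vertices. Let x and x' be two distinct degree-one vertices of G with N_G(x) = {y} and N_G(x') = {y'}. If y is adjacent to y', then deg_G(y) ≥ 4. -/
open SimpleGraph

/-- `F` has a copy in `G`, i.e. `G` has a subgraph isomorphic to `F`:
there is an injective graph homomorphism from `F` to `G`. -/
def HasCopy {α : Type*} {β : Type*} (F : SimpleGraph α) (G : SimpleGraph β) : Prop :=
  ∃ f : F →g G, Function.Injective f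

/-- `G` is `F`-saturated: `G` is `F`-free and adding any edge between two
distinct nonadjacent vertices creates a subgraph isomorphic to `F`. -/
def IsSat {α : Type*} {β : Type*} (F : SimpleGraph α) (G : SimpleGraph β) : Prop :=
  ¬ HasCopy F G ∧
    ∀ x y : β, x ≠ y → ¬ G.Adj x y → HasCopy F (G ⊔ fromEdgeSet {s(x, y)})

/-- `sat(n, F)`: the minimum number of edges in an `F`-saturated graph on `n` vertices. -/
noncomputable def satNumber {α : Type*} (F : SimpleGraph α) (n : ℕ) : ℕ :=
  sInf {m : ℕ | ∃ G : SimpleGraph (Fin n), IsSat F G ∧ G.edgeSet.ncard = m}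

/-- `N_H(W)`: the set of vertices adjacent to all vertices of `W`. -/
def commonNbrs {V : Type*} (H : SimpleGraph V) (W : Set V) : Set V :=
  {v : V | ∀ u ∈ W, H.Adj u v}

/-!
Every vertex of a copy of `C_k` has two distinct cycle-neighbours, so a vertex of degree at most
one is never on the cycle, and a copy in `G + uv` (`G` being `C_k`-free) uses the new edge `uv`.
If `x = y'`, then `xy` is an isolated edge and adding an edge from `x` to a third vertex creates no
cycle. Adding `xy'` forces the cycle through `y', x, y`; unless `y` has a third neighbour `z` it
closes up as the triangle `x y y'`. If `N(y) = {x, y', z}`, add `zx'`: the cycle avoids `x`, so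
either it passes through `y`, whose cycle-neighbours are then `y'` and `z` just like those of `x'`,
making it a `4`-cycle, or it avoids `y`, and replacing `x'` by `y` gives a `C_k` in `G` itself.
-/

open Fin.NatCast in
theorem Fin.le_of_natCast_eq_zero {m c : ℕ} [NeZero m] (hc : c ≠ 0) (h : (c : Fin m) = 0) :
    m ≤ c :=
  Nat.le_of_dvd (Nat.pos_of_ne_zero hc) (Fin.natCast_eq_zero.mp h)

namespace SimpleGraph

variable {α V : Type*}

theorem eq_of_neighborSet_eq_singleton {G : SimpleGraph V} {x y u : V}
    (hx : G.neighborSet x = {y}) (hu : G.Adj x u) : u = y := by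
  rw [← Set.mem_singleton_iff, ← hx]
  exact hu

theorem adj_of_neighborSet_eq_singleton {G : SimpleGraph V} {x y : V}
    (hx : G.neighborSet x = {y}) : G.Adj x y := by
  rw [← mem_neighborSet, hx]
  rfl

theorem neighborSet_sup_edge_of_ne {G : SimpleGraph V} {a b v : V} (ha : v ≠ a) (hb : v ≠ b) :
    (G ⊔ edge a b).neighborSet v = G.neighborSet v := by
  ext w
  simp [edge_adj, ha, hb]

theorem neighborSet_sup_edge_subset (G : SimpleGraph V) (a b : V) :
    (G ⊔ edge a b).neighborSet a ⊆ insert b (G.neighborSet a) := by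
  intro w
  simp only [mem_neighborSet, sup_adj, edge_adj, Set.mem_insert_iff]
  tauto

theorem Copy.exists_adj_eq_of_sup_edge {F : SimpleGraph α} {G : SimpleGraph V} (hF : ¬ F ⊑ G)
    {a b : V} (f : Copy F (G ⊔ edge a b)) : ∃ i j, F.Adj i j ∧ f i = a ∧ f j = b := by
  by_contra! h
  refine hF ⟨⟨⟨f, fun {i j} hij => ?_⟩, f.injective⟩⟩
  have hadj := f.toHom.map_adj hij
  rw [sup_adj, edge_adj] at hadj
  rcases hadj with hG | ⟨hab | hba, -⟩
  · exact hG
  · exact absurd hab.2 (h i j hij hab.1)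
  · exact absurd hba.1 (h j i hij.symm hba.2)

theorem Copy.isContained_of_reroute {F : SimpleGraph α} {G H : SimpleGraph V} {a b : V}
    (f : Copy F H) (hb : b ∉ Set.range f) (hH : ∀ u v, u ≠ a → v ≠ a → H.Adj u v → G.Adj u v)
    (hab : H.neighborSet a ⊆ G.neighborSet b) : F ⊑ G := by
  classical
  refine ⟨⟨⟨fun i => Equiv.swap a b (f i), fun {i j} hij => ?_⟩,
    (Equiv.injective _).comp f.injective⟩⟩
  have hadj := f.toHom.map_adj hij
  have hi : f i ≠ b := fun h => hb ⟨i, h⟩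
  have hj : f j ≠ b := fun h => hb ⟨j, h⟩
  by_cases hia : f i = a
  · rw [hia, Equiv.swap_apply_left, Equiv.swap_apply_of_ne_of_ne (hia ▸ hadj.ne.symm) hj]
    exact hab (hia ▸ hadj)
  by_cases hja : f j = a
  · rw [hja, Equiv.swap_apply_left, Equiv.swap_apply_of_ne_of_ne hia hi]
    exact (hab (hja ▸ hadj.symm)).symm
  rw [Equiv.swap_apply_of_ne_of_ne hia hi, Equiv.swap_apply_of_ne_of_ne hja hj]
  exact hH _ _ hia hja hadj

namespace Copy

open Fin.CommRing

variable {H : SimpleGraph V} {n : ℕ} (f : Copy (cycleGraph (n + 3)) H)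

theorem adj_apply_add_one (i : Fin (n + 3)) : H.Adj (f i) (f (i + 1)) :=
  f.toHom.map_adj (by simp [cycleGraph_adj])

theorem adj_apply_sub_one (i : Fin (n + 3)) : H.Adj (f i) (f (i - 1)) :=
  f.toHom.map_adj (by simp [cycleGraph_adj])

theorem apply_add_one_ne_apply_sub_one (i : Fin (n + 3)) : f (i + 1) ≠ f (i - 1) := fun h => by
  have := Fin.le_of_natCast_eq_zero (m := n + 3) (c := 2) two_ne_zero
    (by push_cast; linear_combination f.injective h)
  omega

theorem notMem_range_of_subsingleton_neighborSet {v : V} (hv : (H.neighborSet v).Subsingleton) :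
    v ∉ Set.range f := by
  rintro ⟨i, rfl⟩
  exact f.apply_add_one_ne_apply_sub_one i (hv (f.adj_apply_add_one i) (f.adj_apply_sub_one i))

theorem eq_pair_of_neighborSet_inter_range_subset {i : Fin (n + 3)} {p q : V}
    (h : H.neighborSet (f i) ∩ Set.range f ⊆ {p, q}) :
    f (i + 1) = p ∧ f (i - 1) = q ∨ f (i + 1) = q ∧ f (i - 1) = p := by
  have h₁ := h ⟨f.adj_apply_add_one i, i + 1, rfl⟩
  have h₂ := h ⟨f.adj_apply_sub_one i, i - 1, rfl⟩
  have hne := f.apply_add_one_ne_apply_sub_one i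
  simp only [Set.mem_insert_iff, Set.mem_singleton_iff] at h₁ h₂
  grind

theorem length_eq_three_of_triangle {i : Fin (n + 3)} {b c : V}
    (ha : H.neighborSet (f i) ⊆ {b, c}) (hb : H.neighborSet b ⊆ {f i, c}) : n + 3 = 3 := by
  have hinj := f.injective
  have key (c : ℕ) (hc : c ≠ 0) (hc3 : c ≤ 3) (h : (c : Fin (n + 3)) = 0) : n + 3 = 3 := by
    have := Fin.le_of_natCast_eq_zero hc h
    omega
  rcases f.eq_pair_of_neighborSet_inter_range_subset (Set.inter_subset_left.trans ha)
    with ⟨h₁, h₂⟩ | ⟨h₁, h₂⟩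
  · have := f.eq_pair_of_neighborSet_inter_range_subset (i := i + 1)
      (h₁ ▸ Set.inter_subset_left.trans hb)
    rw [add_sub_cancel_right] at this
    rcases this with ⟨-, h⟩ | ⟨h, -⟩
    · exact key 1 one_ne_zero (by norm_num)
        (by push_cast; linear_combination hinj (h.trans h₂.symm))
    · exact key 3 three_ne_zero le_rfl
        (by push_cast; linear_combination hinj (h.trans h₂.symm))
  · have := f.eq_pair_of_neighborSet_inter_range_subset (i := i - 1)
      (h₂ ▸ Set.inter_subset_left.trans hb)
    rw [sub_add_cancel] at this
    rcases this with ⟨-, h⟩ | ⟨h, -⟩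
    · exact key 3 three_ne_zero le_rfl
        (by push_cast; linear_combination hinj (h₁.trans h.symm))
    · exact key 1 one_ne_zero (by norm_num)
        (by push_cast; linear_combination hinj (h₁.trans h.symm))

theorem length_eq_four_of_same_neighbors {i j : Fin (n + 3)} (hij : i ≠ j) {p q : V}
    (hi : H.neighborSet (f i) ∩ Set.range f ⊆ {p, q})
    (hj : H.neighborSet (f j) ∩ Set.range f ⊆ {p, q}) : n + 3 = 4 := by
  have hinj := f.injective
  have h4 : ∀ {u v : Fin (n + 3)}, u + 1 = v - 1 → u - 1 = v + 1 → n + 3 = 4 := fun h₁ h₂ => by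
    have h := (Fin.natCast_eq_zero (a := 4) (n := n + 3)).mp
      (by push_cast; linear_combination h₁ - h₂)
    have : n ≤ 1 := by have := Nat.le_of_dvd four_pos h; omega
    interval_cases n <;> omega
  rcases f.eq_pair_of_neighborSet_inter_range_subset hi with ⟨hi₁, hi₂⟩ | ⟨hi₁, hi₂⟩ <;>
    rcases f.eq_pair_of_neighborSet_inter_range_subset hj with ⟨hj₁, hj₂⟩ | ⟨hj₁, hj₂⟩
  · exact absurd (add_right_cancel (hinj (hi₁.trans hj₁.symm))) hij
  · exact h4 (hinj (hi₁.trans hj₂.symm)) (hinj (hi₂.trans hj₁.symm))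
  · exact h4 (hinj (hi₁.trans hj₂.symm)) (hinj (hi₂.trans hj₁.symm))
  · exact absurd (add_right_cancel (hinj (hi₁.trans hj₁.symm))) hij

end Copy

end SimpleGraph

section Saturation

open SimpleGraph

variable {α V : Type*} {F : SimpleGraph α} {G : SimpleGraph V}

theorem hasCopy_iff_isContained : HasCopy F G ↔ F ⊑ G :=
  ⟨fun ⟨f, hf⟩ => ⟨f.toCopy hf⟩, fun ⟨f⟩ => ⟨f.toHom, f.injective⟩⟩

theorem IsSat.not_isContained (h : IsSat F G) : ¬ F ⊑ G :=
  hasCopy_iff_isContained.not.mp h.1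

theorem IsSat.isContained_sup_edge (h : IsSat F G) {u v : V} (hne : u ≠ v) (huv : ¬ G.Adj u v) :
    F ⊑ G ⊔ edge u v :=
  hasCopy_iff_isContained.mp (h.2 u v hne huv)

variable {n : ℕ}

theorem IsSat.card_le_two_of_isolated_edge [Fintype V] (hsat : IsSat (cycleGraph (n + 3)) G)
    {x y : V} (hx : G.neighborSet x = {y}) (hy : G.neighborSet y = {x}) : Fintype.card V ≤ 2 := by
  classical
  suffices h : ∀ z, z = x ∨ z = y from
    (Finset.card_le_card fun z _ => by simpa using h z).trans Finset.card_le_two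
  by_contra! ⟨z, hzx, hzy⟩
  have hyx : y ≠ x := (adj_of_neighborSet_eq_singleton hy).ne
  obtain ⟨f⟩ := hsat.isContained_sup_edge hzx.symm
    fun h => hzy (eq_of_neighborSet_eq_singleton hx h)
  obtain ⟨i, -, -, hi, -⟩ := f.exists_adj_eq_of_sup_edge hsat.not_isContained
  have hxN : (G ⊔ edge x z).neighborSet (f i) ⊆ {z, y} := by
    rw [hi, ← hx]
    exact neighborSet_sup_edge_subset G x z
  have hy_range : y ∉ Set.range f := f.notMem_range_of_subsingleton_neighborSet <| by
    rw [neighborSet_sup_edge_of_ne hyx hzy.symm, hy]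
    exact Set.subsingleton_singleton
  rcases f.eq_pair_of_neighborSet_inter_range_subset (Set.inter_subset_left.trans hxN)
    with ⟨-, h⟩ | ⟨h, -⟩
  exacts [hy_range ⟨_, h⟩, hy_range ⟨_, h⟩]

theorem IsSat.exists_adj_ne_ne (hsat : IsSat (cycleGraph (n + 3)) G) (hn : n ≠ 0)
    {x y y' : V} (hx : G.neighborSet x = {y}) (hyy' : G.Adj y y') (hxy' : x ≠ y') :
    ∃ z, G.Adj y z ∧ z ≠ x ∧ z ≠ y' := by
  by_contra! h
  have hy : G.neighborSet y ⊆ {x, y'} := fun z hz => by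
    by_cases hzx : z = x
    exacts [Or.inl hzx, Or.inr (h z hz hzx)]
  have hyx : y ≠ x := (adj_of_neighborSet_eq_singleton hx).ne.symm
  obtain ⟨f⟩ := hsat.isContained_sup_edge hxy'
    fun h => hyy'.ne (eq_of_neighborSet_eq_singleton hx h).symm
  obtain ⟨i, -, -, hi, -⟩ := f.exists_adj_eq_of_sup_edge hsat.not_isContained
  have h3 := f.length_eq_three_of_triangle (i := i) (b := y) (c := y') ?_ ?_
  · omega
  · rw [hi, Set.pair_comm, ← hx]
    exact neighborSet_sup_edge_subset G x y'
  · rw [hi, neighborSet_sup_edge_of_ne hyx hyy'.ne]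
    exact hy

theorem IsSat.not_neighborSet_subset_of_pendants (hsat : IsSat (cycleGraph (n + 3)) G)
    (hn : n ≠ 1) {x x' y y' z : V} (hxx' : x ≠ x') (hxy' : x ≠ y')
    (hx : G.neighborSet x = {y}) (hx' : G.neighborSet x' = {y'}) (hyy' : G.Adj y y')
    (hyz : G.Adj y z) (hzx : z ≠ x) (hzy' : z ≠ y') :
    ¬ G.neighborSet y ⊆ {x, y', z} := by
  intro hy
  have hzx' : z ≠ x' := fun h => hyy'.ne (eq_of_neighborSet_eq_singleton hx' (h ▸ hyz.symm))
  have hyx' : y ≠ x' := fun h =>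
    hxy' (eq_of_neighborSet_eq_singleton hx' (h ▸ (adj_of_neighborSet_eq_singleton hx).symm))
  obtain ⟨f⟩ := hsat.isContained_sup_edge hzx'
    fun h => hzy' (eq_of_neighborSet_eq_singleton hx' h.symm)
  obtain ⟨-, j, -, -, hj⟩ := f.exists_adj_eq_of_sup_edge hsat.not_isContained
  have hx_range : x ∉ Set.range f := f.notMem_range_of_subsingleton_neighborSet <| by
    rw [neighborSet_sup_edge_of_ne hzx.symm hxx', hx]
    exact Set.subsingleton_singleton
  have hx'N : (G ⊔ edge z x').neighborSet x' ⊆ {y', z} := by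
    rw [edge_comm, Set.pair_comm, ← hx']
    exact neighborSet_sup_edge_subset G x' z
  by_cases hy_range : y ∈ Set.range f
  · obtain ⟨m, hm⟩ := hy_range
    have hmj : m ≠ j := fun h => hyx' (hm.symm.trans ((congrArg f h).trans hj))
    have h4 := f.length_eq_four_of_same_neighbors (p := y') (q := z) hmj ?_ ?_
    · omega
    · rw [hm]
      rintro u ⟨hu, hu_range⟩
      rw [neighborSet_sup_edge_of_ne hyz.ne hyx'] at hu
      rcases hy hu with rfl | h
      exacts [absurd hu_range hx_range, h]
    · rw [hj]
      exact Set.inter_subset_left.trans hx'N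
  · refine hsat.not_isContained (f.isContained_of_reroute hy_range (a := x') ?_ ?_)
    · intro u v hu hv huv
      rw [sup_adj, edge_adj] at huv
      rcases huv with h | ⟨⟨-, rfl⟩ | ⟨rfl, -⟩, -⟩
      exacts [h, absurd rfl hv, absurd rfl hu]
    · exact hx'N.trans (Set.pair_subset hyy' hyz)

end Saturation

theorem adjacent_pendant_neighbors_degree_ge_four
    (k : ℕ) (hk : 5 ≤ k) (V : Type) [Fintype V] (G : SimpleGraph V)
    (hV : 3 ≤ Fintype.card V) (hsat : IsSat (cycleGraph k) G)
    (x x' y y' : V) (hxx : x ≠ x')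
    (hx : G.neighborSet x = {y}) (hx' : G.neighborSet x' = {y'})
    (hadj : G.Adj y y') :
    4 ≤ (G.neighborSet y).ncard := by
  obtain ⟨n, rfl⟩ : ∃ n, k = n + 3 := ⟨k - 3, by omega⟩
  have hxy' : x ≠ y' := by
    rintro rfl
    obtain rfl : x' = y :=
      eq_of_neighborSet_eq_singleton hx (adj_of_neighborSet_eq_singleton hx').symm
    have := hsat.card_le_two_of_isolated_edge hx hx'
    omega
  obtain ⟨z, hyz, hzx, hzy'⟩ := hsat.exists_adj_ne_ne (by omega) hx hadj hxy'
  by_contra! hlt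
  have hsub : {x, y', z} ⊆ G.neighborSet y :=
    Set.insert_subset (adj_of_neighborSet_eq_singleton hx).symm (Set.pair_subset hadj hyz)
  have h3 : ({x, y', z} : Set V).ncard = 3 :=
    Set.ncard_eq_three.mpr ⟨x, y', z, hxy', hzx.symm, hzy'.symm, rfl⟩
  exact hsat.not_neighborSet_subset_of_pendants (by omega) hxx hxy' hx hx' hadj hyz hzx hzy'
    (Set.eq_of_subset_of_ncard_le hsub (by omega)).ge
end

section
/- Let k ≥ 5 and let G be a C_k-saturated graph. Let u_0 u_1 … u_r and v_0 v_1 … v_s be two vertex-disjoint paths in G all of whose vertices have degree two in G, with r + s ≥ k − 1. If u_0 and v_0 have a common neighbor w, then there exists a path in G between w and u_r of length k − r − 3 which does not pass through u_0. -/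
open SimpleGraph

/-
A bare path is a path whose internal vertices have degree two. A path that leaves the start of
a bare path along its first edge has no choice but to follow it, and saturation turns every
non-edge `ab` into a path of length `k - 1` from `a` to `b`; these two facts drive everything.

First, no path on `k` vertices of degree two exists: extend it by the further neighbours of
its ends and join a vertex to the one two or three steps further along; every path of length
`k - 1` between them is forced along the bare path and has the wrong length. Hence `p` and `q`
have at most `k - 2` edges each, both are nontrivial, and `w` lies on neither of them.

Now take a path `R` of length `k - 1` from `u₀` to `v₁`. It cannot start with `w`, since then
`R` minus `u₀` together with `v₀` would be a `C_k`; so it runs along `p` up to `u_r`. It must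
end with `w v₀ v₁`: otherwise it would also run backwards along `q`, and all its `k` vertices
would have degree two. The stretch of `R` from `u_r` to `w` is the required path.
-/

namespace SimpleGraph

variable {V : Type*} {G : SimpleGraph V}

lemma neighborSet_eq_pair_of_ncard_eq_two {v a b : V} (hv : (G.neighborSet v).ncard = 2)
    (ha : G.Adj v a) (hb : G.Adj v b) (hab : a ≠ b) : G.neighborSet v = {a, b} :=
  (Set.eq_of_subset_of_ncard_le (Set.pair_subset (s := G.neighborSet v) ha hb)
    (by rw [hv, Set.ncard_pair hab]) (Set.finite_of_ncard_pos (by rw [hv]; norm_num))).symm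

lemma exists_adj_ne_of_ncard_eq_two {v : V} (hv : (G.neighborSet v).ncard = 2) (y : V) :
    ∃ x, G.Adj v x ∧ x ≠ y := by
  obtain ⟨a, b, hab, hN⟩ := Set.ncard_eq_two.mp hv
  by_cases hay : a = y
  · have hb : b ∈ G.neighborSet v := hN ▸ Set.mem_insert_of_mem _ rfl
    exact ⟨b, hb, hay ▸ hab.symm⟩
  · have ha : a ∈ G.neighborSet v := hN ▸ Set.mem_insert _ _
    exact ⟨a, ha, hay⟩

namespace Walk

variable {u v x : V}

lemma neighborSet_start_eq_pair {p : G.Walk u v} (hlen : 0 < p.length)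
    (hu : (G.neighborSet u).ncard = 2) (hx : G.Adj x u) (hxp : x ∉ p.support) :
    G.neighborSet u = {x, p.snd} :=
  neighborSet_eq_pair_of_ncard_eq_two hu hx.symm (p.adj_snd (by rw [← length_eq_zero_iff]; omega))
    fun h => hxp (h ▸ p.getVert_mem_support 1)

lemma IsCycle.exists_isPath_of_mem_edges {a b : V} {c : G.Walk x x} (hc : c.IsCycle)
    (hab : s(a, b) ∈ c.edges) : ∃ P : G.Walk a b, P.IsPath ∧ P.length + 1 = c.length := by
  classical
  have ha : a ∈ c.support := c.fst_mem_support_of_mem_edges hab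
  set c' := c.rotate a ha
  have hc' : c'.IsCycle := hc.rotate ha
  have hb : b ∈ c'.toSubgraph.neighborSet a :=
    c'.mem_edges_toSubgraph.mpr ((c.rotate_edges a ha).mem_iff.mpr hab)
  rw [hc'.neighborSet_toSubgraph_endpoint] at hb
  have h3 := hc.three_le_length
  rcases hb with rfl | hb
  · exact ⟨c'.tail.reverse, hc'.isPath_tail.reverse, by simp [c']; omega⟩
  · obtain rfl : b = c'.penultimate := hb
    exact ⟨c'.dropLast, hc'.isPath_dropLast, by simp [c']; omega⟩

lemma IsPath.start_notMem_support_drop {R : G.Walk u v} (hR : R.IsPath) {n : ℕ} (hn : 0 < n)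
    (hnR : n ≤ R.length) : u ∉ (R.drop n).support := by
  intro hu
  obtain ⟨i, hi, hiR⟩ := mem_support_iff_exists_getVert.mp hu
  rw [drop_getVert] at hi
  have := hR.getVert_injOn (by simp; rw [drop_length] at hiR; omega) (by simp)
    (hi.trans R.getVert_zero.symm)
  omega

lemma IsPath.exists_isPath_getVert_getVert {R : G.Walk u v} (hR : R.IsPath) {i j : ℕ}
    (hi : 0 < i) (hij : i ≤ j) (hj : j ≤ R.length) :
    ∃ S : G.Walk (R.getVert j) (R.getVert i), S.IsPath ∧ S.length = j - i ∧ u ∉ S.support := by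
  have h : (R.drop i).getVert (j - i) = R.getVert j := by
    rw [drop_getVert, Nat.add_sub_cancel' hij]
  refine ⟨(((R.drop i).take (j - i)).copy rfl h).reverse, by simpa using (hR.drop i).take _,
    by simp; omega, ?_⟩
  simp only [support_reverse, support_copy, List.mem_reverse]
  exact fun hu => hR.start_notMem_support_drop hi (by omega)
    (((R.drop i).isSubwalk_take _).support_subset hu)

lemma IsPath.getVert_eq_of_neighborSet_eq {R : G.Walk u v} (hR : R.IsPath) {i : ℕ}
    (hi : i + 2 ≤ R.length) (hN : G.neighborSet (R.getVert (i + 1)) = {x, R.getVert (i + 2)}) :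
    R.getVert i = x := by
  have h : R.getVert i ∈ G.neighborSet (R.getVert (i + 1)) :=
    (R.adj_getVert_succ (by omega)).symm
  rw [hN] at h
  rcases h with h | h
  · exact h
  · have := hR.getVert_injOn (by simp; omega) (by simp; omega) h
    omega

lemma IsPath.notMem_support_of_neighborSet_eq {R : G.Walk u v} (hR : R.IsPath)
    (hx : G.neighborSet x = {u, v}) (hlen : R.length ≠ 2) : x ∉ R.support := by
  have hinj := hR.getVert_injOn
  have hnbr : ∀ i ≤ R.length, G.Adj x (R.getVert i) → i = 0 ∨ i = R.length := by
    intro i hi h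
    have h' : R.getVert i ∈ G.neighborSet x := h
    rw [hx] at h'
    rcases h' with h' | h'
    · exact .inl (hinj (by simp; omega) (by simp) (h'.trans R.getVert_zero.symm))
    · exact .inr (hinj (by simp; omega) (by simp) (h'.trans R.getVert_length.symm))
  have hxu : G.Adj x u := (hx ▸ Set.mem_insert _ _ : u ∈ G.neighborSet x)
  have hxv : G.Adj x v := (hx ▸ Set.mem_insert_of_mem _ rfl : v ∈ G.neighborSet x)
  intro hmem
  obtain ⟨j, rfl, hj⟩ := mem_support_iff_exists_getVert.mp hmem
  have hj₀ : j ≠ 0 := by rintro rfl; exact hxu.ne R.getVert_zero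
  have hjl : j ≠ R.length := by rintro rfl; exact hxv.ne R.getVert_length
  have hnext := hnbr (j + 1) (by omega) (R.adj_getVert_succ (by omega))
  have hadj := R.adj_getVert_succ (i := j - 1) (by omega)
  rw [Nat.sub_add_cancel (by omega)] at hadj
  have hprev := hnbr (j - 1) (by omega) hadj.symm
  omega

def IsBarePath (T : G.Walk u v) : Prop :=
  T.IsPath ∧ ∀ i, 0 < i → i < T.length → (G.neighborSet (T.getVert i)).ncard = 2

lemma IsPath.isBarePath {T : G.Walk u v} (hT : T.IsPath)
    (hdeg : ∀ y ∈ T.support, (G.neighborSet y).ncard = 2) : T.IsBarePath :=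
  ⟨hT, fun i _ _ => hdeg _ (T.getVert_mem_support i)⟩

namespace IsBarePath

variable {T : G.Walk u v}

lemma neighborSet_getVert (hT : T.IsBarePath) {i : ℕ} (hi₀ : 0 < i) (hi : i < T.length) :
    G.neighborSet (T.getVert i) = {T.getVert (i - 1), T.getVert (i + 1)} := by
  have hprev := T.adj_getVert_succ (i := i - 1) (by omega)
  rw [Nat.sub_add_cancel hi₀] at hprev
  refine neighborSet_eq_pair_of_ncard_eq_two (hT.2 i hi₀ hi) hprev.symm
    (T.adj_getVert_succ hi) fun h => ?_
  have := hT.1.getVert_injOn (by simp; omega) (by simp; omega) h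
  omega

lemma reverse (hT : T.IsBarePath) : T.reverse.IsBarePath := by
  refine ⟨hT.1.reverse, fun i hi₀ hi => ?_⟩
  rw [length_reverse] at hi
  rw [getVert_reverse]
  exact hT.2 _ (by omega) (by omega)

lemma take (hT : T.IsBarePath) (n : ℕ) : (T.take n).IsBarePath := by
  refine ⟨hT.1.take n, fun i hi₀ hi => ?_⟩
  rw [take_length] at hi
  rw [take_getVert]
  exact hT.2 _ (by omega) (by omega)

lemma drop (hT : T.IsBarePath) (n : ℕ) : (T.drop n).IsBarePath := by
  refine ⟨hT.1.drop n, fun i hi₀ hi => ?_⟩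
  rw [drop_length] at hi
  rw [drop_getVert]
  exact hT.2 _ (by omega) (by omega)

lemma concat (hT : T.IsBarePath) (hv : (G.neighborSet v).ncard = 2) (h : G.Adj v x)
    (hx : x ∉ T.support) : (T.concat h).IsBarePath := by
  refine ⟨hT.1.concat hx h, fun i hi₀ hi => ?_⟩
  rw [length_concat] at hi
  rw [concat_eq_append, getVert_append']
  rcases Nat.lt_or_ge i T.length with hi' | hi'
  · rw [if_pos hi'.le]
    exact hT.2 i hi₀ hi'
  · rw [if_pos (by omega), show i = T.length by omega, getVert_length]
    exact hv

lemma cons (hT : T.IsBarePath) (hu : (G.neighborSet u).ncard = 2) (h : G.Adj x u)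
    (hx : x ∉ T.support) : (Walk.cons h T).IsBarePath := by
  simpa [reverse_concat] using (hT.reverse.concat hu h.symm (by simpa using hx)).reverse

lemma getVert_eq_of_snd_eq (hT : T.IsBarePath) {R : G.Walk u x} (hR : R.IsPath)
    (hsnd : R.snd = T.snd) : ∀ t ≤ T.length, t ≤ R.length → R.getVert t = T.getVert t
  | 0, _, _ => by simp
  | 1, _, _ => hsnd
  | t + 2, htT, htR => by
    have h₁ := hT.getVert_eq_of_snd_eq hR hsnd (t + 1) (by omega) (by omega)
    have h₀ := hT.getVert_eq_of_snd_eq hR hsnd t (by omega) (by omega)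
    have hadj : R.getVert (t + 2) ∈ G.neighborSet (T.getVert (t + 1)) :=
      h₁ ▸ R.adj_getVert_succ (by omega)
    rw [hT.neighborSet_getVert (by omega) (by omega)] at hadj
    rcases hadj with h | h
    · have := hR.getVert_injOn (by simp; omega) (by simp; omega) (h.trans h₀.symm)
      omega
    · exact h

lemma length_eq_of_snd_eq (hT : T.IsBarePath) {R : G.Walk u x} (hR : R.IsPath)
    (hsnd : R.snd = T.snd) {j : ℕ} (hj : j ≤ T.length) (hx : T.getVert j = x) :
    R.length = j := by
  have hforce := hT.getVert_eq_of_snd_eq hR hsnd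
  rcases Nat.le_total R.length j with hle | hle
  · have h := (hforce _ (by omega) le_rfl).symm.trans (R.getVert_length.trans hx.symm)
    exact hT.1.getVert_injOn (by simp; omega) (by simp; omega) h
  · have h := (hforce j hj hle).trans (hx.trans R.getVert_length.symm)
    exact (hR.getVert_injOn (by simp; omega) (by simp) h).symm

lemma eq_of_adj_of_mem_support (hT : T.IsBarePath) (hx : G.Adj x u) (hxs : x ≠ T.snd)
    (hmem : x ∈ T.support) : x = v := by
  obtain ⟨i, rfl, hi⟩ := mem_support_iff_exists_getVert.mp hmem
  rcases Nat.eq_zero_or_pos i with rfl | hi₀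
  · exact absurd hx (by simp)
  rcases Nat.lt_or_ge i T.length with hlt | hge
  · have hu : T.getVert 0 ∈ G.neighborSet (T.getVert i) := by
      rw [T.getVert_zero, mem_neighborSet]
      exact hx
    rw [hT.neighborSet_getVert hi₀ hlt] at hu
    have hinj := hT.1.getVert_injOn
    rcases hu with h | h
    · obtain rfl : i = 1 := by
        have := hinj (by simp) (by simp; omega) h
        omega
      exact absurd rfl hxs
    · have := hinj (by simp) (by simp; omega) h
      omega
  · exact T.getVert_of_length_le hge

lemma mem_support_of_adj_getVert (hT : T.IsBarePath) {i : ℕ} (hi₀ : 0 < i) (hi : i < T.length)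
    (hy : G.Adj (T.getVert i) x) : x ∈ T.support := by
  have hx : x ∈ G.neighborSet (T.getVert i) := hy
  rw [hT.neighborSet_getVert hi₀ hi] at hx
  rcases hx with rfl | rfl <;> exact T.getVert_mem_support _

end IsBarePath

lemma IsPath.forall_ncard_neighborSet_eq_two_of_snd_eq {a b y : V} {R : G.Walk a b}
    (hR : R.IsPath) {S : G.Walk a x} {T : G.Walk b y} (hS : S.IsPath) (hT : T.IsPath)
    (hSdeg : ∀ v ∈ S.support, (G.neighborSet v).ncard = 2)
    (hTdeg : ∀ v ∈ T.support, (G.neighborSet v).ncard = 2)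
    (hRS : R.snd = S.snd) (hRT : 0 < T.length → R.penultimate = T.snd)
    (hlen : R.length ≤ S.length + T.length + 1) :
    ∀ v ∈ R.support, (G.neighborSet v).ncard = 2 := by
  intro v hv
  obtain ⟨i, rfl, hi⟩ := mem_support_iff_exists_getVert.mp hv
  by_cases hiS : i ≤ S.length
  · rw [(hS.isBarePath hSdeg).getVert_eq_of_snd_eq hR hRS i hiS hi]
    exact hSdeg _ (S.getVert_mem_support i)
  by_cases hib : i = R.length
  · rw [hib, R.getVert_length]
    exact hTdeg b T.start_mem_support
  have h := (hT.isBarePath hTdeg).getVert_eq_of_snd_eq hR.reverse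
    ((R.snd_reverse).trans (hRT (by omega))) (R.length - i) (by omega) (by simp)
  rw [getVert_reverse, Nat.sub_sub_self hi] at h
  rw [h]
  exact hTdeg _ (T.getVert_mem_support _)

end Walk

end SimpleGraph

lemma hasCopy_iff_isContained_s11 {α β : Type*} {F : SimpleGraph α} {H : SimpleGraph β} :
    HasCopy F H ↔ F ⊑ H :=
  ⟨fun ⟨f, hf⟩ => ⟨⟨f, hf⟩⟩, fun ⟨f⟩ => ⟨f.toHom, f.injective⟩⟩

namespace IsSat

open SimpleGraph.Walk

variable {V : Type*} {G : SimpleGraph V} {k : ℕ}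

lemma length_add_one_ne (hk : 3 ≤ k) (hsat : IsSat (cycleGraph k) G) {a b : V}
    {R : G.Walk a b} (hR : R.IsPath) (hba : G.Adj b a) : R.length + 1 ≠ k := by
  intro hlen
  apply hsat.1
  rw [hasCopy_iff_isContained_s11, cycleGraph_isContained_iff (by omega)]
  refine ⟨b, .cons hba R, (cons_isCycle_iff R hba).mpr ⟨hR, fun he => ?_⟩, by simp [hlen]⟩
  have := hR.length_eq_one_of_mem_edges (Sym2.eq_swap ▸ he)
  omega

lemma length_add_two_ne (hk : 3 ≤ k) (hsat : IsSat (cycleGraph k) G) {a b c : V}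
    {R : G.Walk a b} (hR : R.IsPath) (hc : c ∉ R.support) (hca : G.Adj c a) (hcb : G.Adj c b) :
    R.length + 2 ≠ k := by
  simpa using hsat.length_add_one_ne hk (R := .cons hca R) (hR.cons hc) hcb.symm

lemma exists_isPath_length (hk : 3 ≤ k) (hsat : IsSat (cycleGraph k) G) {a b : V} (hab : a ≠ b)
    (hnadj : ¬ G.Adj a b) : ∃ R : G.Walk a b, R.IsPath ∧ R.length = k - 1 := by
  obtain ⟨x, c, hc, hlen⟩ := (cycleGraph_isContained_iff (by omega)).mp
    (hasCopy_iff_isContained_s11.mp (hsat.2 a b hab hnadj))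
  have hG : ∀ {y z} (W : (G ⊔ fromEdgeSet {s(a, b)}).Walk y z), s(a, b) ∉ W.edges →
      ∀ e ∈ W.edges, e ∈ G.edgeSet := by
    intro y z W hW e he
    have := W.edges_subset_edgeSet he
    simp only [edgeSet_sup, edgeSet_fromEdgeSet, Set.mem_union, Set.mem_sdiff,
      Set.mem_singleton_iff] at this
    exact this.resolve_right fun h => hW (h.1 ▸ he)
  by_cases he : s(a, b) ∈ c.edges
  · obtain ⟨P, hP, hPlen⟩ := hc.exists_isPath_of_mem_edges he
    have hPe : s(a, b) ∉ P.edges := fun h => by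
      have := hP.length_eq_one_of_mem_edges h
      omega
    exact ⟨P.transfer G (hG P hPe), hP.transfer _, by simp; omega⟩
  · exact absurd ((cycleGraph_isContained_iff (by omega)).mpr
      ⟨x, c.transfer G (hG c he), hc.transfer _, by simpa using hlen⟩)
      (hasCopy_iff_isContained_s11.not.mp hsat.1)

lemma neighborSet_ne_pair (hk : 5 ≤ k) (hsat : IsSat (cycleGraph k) G) {a b : V}
    {R : G.Walk a b} (hR : R.IsPath) (hlen : R.length = k - 1) (c : V) :
    G.neighborSet c ≠ {R.snd, b} := by
  intro hc
  have htail := R.length_tail_add_one (by rw [← length_eq_zero_iff]; omega)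
  have hcR := hR.tail.notMem_support_of_neighborSet_eq hc (by omega)
  refine hsat.length_add_two_ne (by omega) hR.tail hcR ?_ ?_ (by omega)
  · exact (hc ▸ Set.mem_insert _ _ : R.snd ∈ G.neighborSet c)
  · exact (hc ▸ Set.mem_insert_of_mem _ rfl : b ∈ G.neighborSet c)

lemma exists_isPath_of_isBarePath (hk : 3 ≤ k) (hsat : IsSat (cycleGraph k) G) {u v : V}
    {T : G.Walk u v} (hT : T.IsBarePath) {d : ℕ} (hd : 2 ≤ d) (hdT : d < T.length) :
    ∃ R : G.Walk (T.getVert d) u, R.IsPath ∧ R.length = k - 1 ∧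
      (R.snd = T.getVert (d - 1) ∨ R.snd = T.getVert (d + 1)) := by
  have hinj := hT.1.getVert_injOn
  have hN := hT.neighborSet_getVert (by omega) hdT
  have hne : T.getVert d ≠ u := fun h => by
    have := hinj (by simp; omega) (by simp) (h.trans T.getVert_zero.symm)
    omega
  have hnadj : ¬ G.Adj (T.getVert d) u := by
    intro h
    have hu : T.getVert 0 ∈ G.neighborSet (T.getVert d) := by simpa using h
    rw [hN] at hu
    rcases hu with h' | h' <;>
    · have := hinj (by simp) (by simp; omega) h'
      omega
  obtain ⟨R, hR, hRlen⟩ := hsat.exists_isPath_length hk hne hnadj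
  have hsnd : R.snd ∈ G.neighborSet (T.getVert d) := R.adj_snd (not_nil_of_ne hne)
  rw [hN] at hsnd
  exact ⟨R, hR, hRlen, hsnd⟩

lemma length_le_of_isBarePath (hk : 4 ≤ k) (hsat : IsSat (cycleGraph k) G) {u v : V}
    {T : G.Walk u v} (hT : T.IsBarePath) : T.length ≤ k := by
  by_contra! hlen
  obtain ⟨R, hR, hRlen, hsnd | hsnd⟩ :=
    hsat.exists_isPath_of_isBarePath (by omega) hT (d := 2) le_rfl (by omega)
  · have := (hT.take 2).reverse.length_eq_of_snd_eq hR
      (by simpa [snd_reverse, take_getVert, show min 2 T.length = 2 by omega] using hsnd)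
      (j := 2) (by simp; omega) (by simp [getVert_reverse])
    omega
  · have h := (hT.drop 2).getVert_eq_of_snd_eq hR (by simpa [drop_getVert] using hsnd) (k - 1)
      (by simp; omega) (by omega)
    rw [← hRlen, getVert_length, drop_getVert] at h
    have := hT.1.getVert_injOn (by simp; omega) (by simp) (h.symm.trans T.getVert_zero.symm)
    omega

lemma not_adj_of_isBarePath (hk : 5 ≤ k) (hsat : IsSat (cycleGraph k) G) {u v : V}
    {T : G.Walk u v} (hT : T.IsBarePath) (hlen : T.length = k)
    (hv : (G.neighborSet v).ncard = 2) : ¬ G.Adj v u := by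
  intro hvu
  obtain ⟨R, hR, hRlen, hsnd | hsnd⟩ :=
    hsat.exists_isPath_of_isBarePath (by omega) hT (d := 3) (by omega) (by omega)
  · have := (hT.take 3).reverse.length_eq_of_snd_eq hR
      (by simpa [snd_reverse, take_getVert, show min 3 T.length = 3 by omega] using hsnd)
      (j := 3) (by simp; omega) (by simp [getVert_reverse])
    omega
  · have hS := (hT.drop 3).concat hv hvu (hT.1.start_notMem_support_drop (by omega) (by omega))
    have h4 : 1 < T.length - 3 := by omega
    have := hS.length_eq_of_snd_eq hR
      (by simpa [concat_eq_append, getVert_append, drop_getVert, h4] using hsnd)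
      (j := k - 2) (by simp; omega) (by convert getVert_length _ using 2; simp; omega)
    omega

lemma length_lt_of_forall_ncard_eq_two (hk : 5 ≤ k) (hsat : IsSat (cycleGraph k) G)
    {a b : V} {q : G.Walk a b} (hq : q.IsPath)
    (hdeg : ∀ y ∈ q.support, (G.neighborSet y).ncard = 2) : q.length < k - 1 := by
  by_contra! hlen
  wlog hq' : q.length = k - 1 generalizing b q
  · exact this (hq.take (k - 1)) (fun y hy => hdeg y ((q.isSubwalk_take _).support_subset hy))
      (by simp; omega) (by simp; omega)
  have hqb := hq.isBarePath hdeg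
  have ha := hdeg a q.start_mem_support
  have hb := hdeg b q.end_mem_support
  have hnadj : ¬ G.Adj b a := fun h => hsat.length_add_one_ne (by omega) hq h (by omega)
  obtain ⟨x, hax, hx⟩ := exists_adj_ne_of_ncard_eq_two ha q.snd
  have hxq : x ∉ q.support := fun hmem =>
    hnadj (hqb.eq_of_adj_of_mem_support hax.symm hx hmem ▸ hax.symm)
  have hX := hqb.cons ha hax.symm hxq
  obtain ⟨z, hbz, hz⟩ := exists_adj_ne_of_ncard_eq_two hb q.penultimate
  have hzx : z ≠ x := fun h =>
    hsat.not_adj_of_isBarePath hk hX (by simp; omega) hb (h ▸ hbz)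
  have hzq : z ∉ q.support := fun hmem => hnadj (hqb.reverse.eq_of_adj_of_mem_support hbz.symm
    (by rwa [snd_reverse]) (by simpa using hmem) ▸ hbz)
  have := hsat.length_le_of_isBarePath (by omega) (hX.concat hb hbz (by simp [hzx, hzq]))
  simp at this
  omega

lemma notMem_support_of_adj_adj (hk : 5 ≤ k) (hsat : IsSat (cycleGraph k) G)
    {u₀ uᵣ v₀ vₛ w : V} {p : G.Walk u₀ uᵣ} {q : G.Walk v₀ vₛ} (hp : p.IsPath) (hq : q.IsPath)
    (hdisj : ∀ v ∈ p.support, v ∉ q.support)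
    (hpdeg : ∀ v ∈ p.support, (G.neighborSet v).ncard = 2)
    (hqdeg : ∀ v ∈ q.support, (G.neighborSet v).ncard = 2)
    (hlen : k - 1 ≤ p.length + q.length) (hw₁ : G.Adj w u₀) (hw₂ : G.Adj w v₀) :
    w ∉ q.support := by
  intro hwq
  obtain ⟨j, rfl, hj⟩ := mem_support_iff_exists_getVert.mp hwq
  have hj₀ : j ≠ 0 := by rintro rfl; exact hw₂.ne q.getVert_zero
  have hjs : j = q.length := by
    by_contra h
    exact hdisj u₀ p.start_mem_support
      ((hq.isBarePath hqdeg).mem_support_of_adj_getVert (by omega) (by omega) hw₁)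
  rw [hjs, q.getVert_length] at hw₁
  have hX : (q.append (.cons hw₁ p)).IsPath := by
    rw [isPath_def, support_append, support_cons, List.tail_cons, List.nodup_append']
    exact ⟨hq.support_nodup, hp.support_nodup, fun v hvq hvp => hdisj v hvp hvq⟩
  have := hsat.length_lt_of_forall_ncard_eq_two hk hX fun v hv => by
    rw [support_append, support_cons, List.tail_cons, List.mem_append] at hv
    exact hv.elim (hqdeg v) (hpdeg v)
  simp only [length_append, length_cons] at this
  omega

lemma exists_isPath_snd_eq (hk : 5 ≤ k) (hsat : IsSat (cycleGraph k) G) {u₀ u₁ v₀ v₁ w : V}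
    (hNu : G.neighborSet u₀ = {w, u₁}) (hNv : G.neighborSet v₀ = {w, v₁}) (hu₀ : u₀ ≠ v₁)
    (hw : w ≠ v₁) (hu₁ : u₁ ≠ v₁) :
    ∃ R : G.Walk u₀ v₁, R.IsPath ∧ R.length = k - 1 ∧ R.snd = u₁ := by
  have hnadj : ¬ G.Adj u₀ v₁ := by
    intro h
    have h' : v₁ ∈ G.neighborSet u₀ := h
    rw [hNu] at h'
    rcases h' with h' | (h' : v₁ = u₁)
    · exact hw h'.symm
    · exact hu₁ h'.symm
  obtain ⟨R, hR, hRlen⟩ := hsat.exists_isPath_length (by omega) hu₀ hnadj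
  refine ⟨R, hR, hRlen, ?_⟩
  have h : R.snd ∈ G.neighborSet u₀ := R.adj_snd (not_nil_of_ne hu₀)
  rw [hNu] at h
  rcases h with h | h
  · exact absurd (h ▸ hNv) (hsat.neighborSet_ne_pair hk hR hRlen v₀)
  · exact h

lemma penultimate_eq_of_snd_eq (hk : 5 ≤ k) (hsat : IsSat (cycleGraph k) G)
    {u₀ uᵣ v₀ vₛ : V} {p : G.Walk u₀ uᵣ} {q : G.Walk v₀ vₛ} (hp : p.IsPath) (hq : q.IsPath)
    (hpdeg : ∀ v ∈ p.support, (G.neighborSet v).ncard = 2)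
    (hqdeg : ∀ v ∈ q.support, (G.neighborSet v).ncard = 2)
    (hlen : k - 1 ≤ p.length + q.length) {R : G.Walk u₀ q.snd} (hR : R.IsPath)
    (hRlen : R.length = k - 1) (hRp : R.snd = p.snd) : R.penultimate = v₀ := by
  by_contra hne
  have := hsat.length_lt_of_forall_ncard_eq_two hk hR
    (hR.forall_ncard_neighborSet_eq_two_of_snd_eq hp (hq.drop 1) hpdeg
      (fun v hv => hqdeg v ((q.isSubwalk_drop 1).support_subset hv)) hRp ?_ (by simp; omega))
  · omega
  intro hq₂
  have h : R.penultimate ∈ G.neighborSet q.snd :=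
    (R.adj_penultimate (by rw [← length_eq_zero_iff]; omega)).symm
  rw [(hq.isBarePath hqdeg).neighborSet_getVert (i := 1) (by omega) (by simp at hq₂; omega)] at h
  rcases h with h | h
  · exact absurd (by simpa using h) hne
  · simpa [drop_getVert] using h

end IsSat

theorem path_from_common_neighbor_general
    (k : ℕ) (hk : 5 ≤ k) (V : Type) (G : SimpleGraph V)
    (hsat : IsSat (cycleGraph k) G)
    (u₀ uᵣ v₀ vₛ : V) (p : G.Walk u₀ uᵣ) (q : G.Walk v₀ vₛ)
    (hp : p.IsPath) (hq : q.IsPath)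
    (hdisj : ∀ v ∈ p.support, v ∉ q.support)
    (hpdeg : ∀ v ∈ p.support, (G.neighborSet v).ncard = 2)
    (hqdeg : ∀ v ∈ q.support, (G.neighborSet v).ncard = 2)
    (hlen : k - 1 ≤ p.length + q.length)
    (w : V) (hw₁ : G.Adj w u₀) (hw₂ : G.Adj w v₀) :
    ∃ R : G.Walk w uᵣ, R.IsPath ∧ R.length = k - p.length - 3 ∧ u₀ ∉ R.support := by
  have hr := hsat.length_lt_of_forall_ncard_eq_two hk hp hpdeg
  have hs := hsat.length_lt_of_forall_ncard_eq_two hk hq hqdeg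
  have hwq := hsat.notMem_support_of_adj_adj hk hp hq hdisj hpdeg hqdeg hlen hw₁ hw₂
  have hwp := hsat.notMem_support_of_adj_adj hk hq hp (fun v hv hv' => hdisj v hv' hv)
    hqdeg hpdeg (by omega) hw₂ hw₁
  have hNu := p.neighborSet_start_eq_pair (by omega) (hpdeg u₀ p.start_mem_support) hw₁ hwp
  have hNv := q.neighborSet_start_eq_pair (by omega) (hqdeg v₀ q.start_mem_support) hw₂ hwq
  have hv₁ : q.snd ∉ p.support := fun h => hdisj _ h (q.getVert_mem_support 1)
  obtain ⟨R, hR, hRlen, hRp⟩ := hsat.exists_isPath_snd_eq hk hNu hNv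
    (fun h => hv₁ (h ▸ p.start_mem_support)) (fun h => hwq (h ▸ q.getVert_mem_support 1))
    (fun h => hv₁ (h ▸ p.getVert_mem_support 1))
  have hRv : R.getVert (k - 2) = v₀ := by
    have := hsat.penultimate_eq_of_snd_eq hk hp hq hpdeg hqdeg hlen hR hRlen hRp
    rwa [Walk.penultimate, hRlen, show k - 1 - 1 = k - 2 by omega] at this
  have hRw : R.getVert (k - 3) = w := hR.getVert_eq_of_neighborSet_eq (by omega) (by
    rwa [show k - 3 + 1 = k - 2 by omega, hRv, show k - 3 + 2 = R.length by omega,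
      R.getVert_length])
  have hRu : R.getVert p.length = uᵣ :=
    ((hp.isBarePath hpdeg).getVert_eq_of_snd_eq hR hRp _ le_rfl (by omega)).trans p.getVert_length
  have hrk : p.length ≠ k - 2 := fun h =>
    hdisj uᵣ p.end_mem_support (by rw [← hRu, h, hRv]; exact q.start_mem_support)
  obtain ⟨S, hS, hSlen, hSu⟩ := hR.exists_isPath_getVert_getVert (i := p.length) (j := k - 3)
    (by omega) (by omega) (by omega)
  exact ⟨S.copy hRw hRu, by simpa using hS, by simp; omega, by simpa using hSu⟩

theorem path_from_common_neighbor
    (k : ℕ) (hk : 5 ≤ k) (V : Type) [Fintype V] (G : SimpleGraph V)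
    (hsat : IsSat (cycleGraph k) G)
    (u₀ uᵣ v₀ vₛ : V) (p : G.Walk u₀ uᵣ) (q : G.Walk v₀ vₛ)
    (hp : p.IsPath) (hq : q.IsPath)
    (hdisj : ∀ v ∈ p.support, v ∉ q.support)
    (hpdeg : ∀ v ∈ p.support, (G.neighborSet v).ncard = 2)
    (hqdeg : ∀ v ∈ q.support, (G.neighborSet v).ncard = 2)
    (hlen : k - 1 ≤ p.length + q.length)
    (w : V) (hw₁ : G.Adj w u₀) (hw₂ : G.Adj w v₀) :
    ∃ R : G.Walk w uᵣ, R.IsPath ∧ R.length = k - p.length - 3 ∧ u₀ ∉ R.support :=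
  path_from_common_neighbor_general k hk V G hsat u₀ uᵣ v₀ vₛ p q hp hq hdisj hpdeg hqdeg hlen w hw₁
    hw₂
end

section
/- Let k ≥ 7 and let G be a C_k-saturated graph. Let u_0 u_1 … u_{k−4} and v_0 v_1 … v_{k−4} be two vertex-disjoint paths in G all of whose vertices have degree two in G. Then u_0 and v_0 have no common neighbor. -/
open SimpleGraph

/-!
Write `k = m + 7`, `p = u₀ ⋯ u_{m+3}`, `q = v₀ ⋯ v_{m+3}`, and let `w` be a common neighbour of
`u₀` and `v₀`. A path that enters a path of degree-two vertices along its first edge, and does not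
end on it, must run along all of it. By saturation there is a `u₀`–`v₀` path `R` on `k` vertices. It
cannot run along both `p` and `q` (its vertex `u_{m+3}` would be `v₃`), so up to symmetry
`R = u₀ ⋯ u_{m+3} a w v₀` with `a ≠ w`. By saturation again there is a `u₀`–`v₁` path `S` on `k`
vertices. If `S` leaves `u₀` through `w`, then replacing `u₀` by `v₀` closes a `k`-cycle in `G`.
Otherwise `S` runs along `p` and then through `a`, which forces `a = v₃`; but then `v₃` has the
three neighbours `v₂`, `u_{m+3}` and `w`.
-/
namespace SimpleGraph

variable {V : Type*} {G : SimpleGraph V}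

theorem eq_or_eq_of_ncard_neighborSet_eq_two {x a b c : V} (h2 : (G.neighborSet x).ncard = 2)
    (ha : G.Adj x a) (hb : G.Adj x b) (hab : a ≠ b) (hc : G.Adj x c) : c = a ∨ c = b := by
  have hpair : ({a, b} : Set V) = G.neighborSet x :=
    Set.eq_of_subset_of_ncard_le (Set.insert_subset ha (Set.singleton_subset_iff.2 hb))
      (by rw [h2, Set.ncard_pair hab]) (Set.finite_of_ncard_ne_zero (by omega))
  have hc' : c ∈ G.neighborSet x := hc
  rw [← hpair] at hc'
  simpa using hc'

theorem hasCopy_cycleGraph_iff {k : ℕ} (hk : 2 < k) :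
    HasCopy (cycleGraph k) G ↔ ∃ (v : V) (c : G.Walk v v), c.IsCycle ∧ c.length = k := by
  rw [← cycleGraph_isContained_iff hk]
  exact ⟨fun ⟨f, hf⟩ => ⟨f.toCopy hf⟩, fun ⟨c⟩ => ⟨c.toHom, c.injective⟩⟩

namespace Walk

theorem IsPath.getVert_eq_getVert_iff {u v : V} {p : G.Walk u v} (hp : p.IsPath) {i j : ℕ}
    (hi : i ≤ p.length) (hj : j ≤ p.length) : p.getVert i = p.getVert j ↔ i = j :=
  ⟨fun h => hp.getVert_injOn hi hj h, fun h => h ▸ rfl⟩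

theorem IsPath.hasCopy_cycleGraph_of_adj {x y : V} {p : G.Walk x y} (hp : p.IsPath)
    (hlen : 2 ≤ p.length) (h : G.Adj y x) : HasCopy (cycleGraph (p.length + 1)) G :=
  (hasCopy_cycleGraph_iff (by omega)).2
    ⟨y, cons h p, isCycle_iff_isPath_tail_and_le_length.2 ⟨by simpa, by simp; omega⟩, rfl⟩

theorem IsCycle.exists_isPath_of_snd_eq {x y : V} {c : (G ⊔ fromEdgeSet {s(x, y)}).Walk x x}
    (hc : c.IsCycle) (hsnd : c.snd = y) :
    ∃ p : G.Walk x y, p.IsPath ∧ p.length + 1 = c.length := by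
  have hcons := c.cons_tail_eq hc.not_nil
  obtain ⟨htail, hedge⟩ :=
    (cons_isCycle_iff c.tail (c.adj_snd hc.not_nil)).1 (by rw [hcons]; exact hc)
  have hG : ∀ e ∈ c.tail.reverse.edges, e ∈ G.edgeSet := by
    intro e he
    have he' := c.tail.reverse.edges_subset_edgeSet he
    rw [edges_reverse, List.mem_reverse] at he
    rw [edgeSet_sup, edgeSet_fromEdgeSet] at he'
    rcases he' with he' | ⟨rfl, -⟩
    · exact he'
    · rw [show s(x, c.snd) = s(x, y) by rw [hsnd]] at hedge
      exact absurd he hedge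
  refine ⟨(c.tail.reverse.transfer G hG).copy rfl hsnd,
    by simpa using htail.reverse.transfer hG, ?_⟩
  have := hc.three_le_length
  simp only [length_copy, length_transfer, length_reverse, length_tail]
  omega

end Walk

open Walk in
theorem exists_isPath_of_hasCopy_cycleGraph_sup_edge {k : ℕ} (hk : 2 < k) {x y : V}
    (hfree : ¬ HasCopy (cycleGraph k) G)
    (hcopy : HasCopy (cycleGraph k) (G ⊔ fromEdgeSet {s(x, y)})) :
    ∃ p : G.Walk x y, p.IsPath ∧ p.length + 1 = k := by
  classical
  obtain ⟨v, c, hc, rfl⟩ := (hasCopy_cycleGraph_iff hk).1 hcopy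
  by_cases he : s(x, y) ∈ c.edges
  · -- Rotated to start at `x`, the cycle leaves `x` along `xy` in one of its two directions.
    have hx := c.fst_mem_support_of_mem_edges he
    obtain ⟨d, hd, hdlen, hed⟩ : ∃ d : (G ⊔ fromEdgeSet {s(x, y)}).Walk x x,
        d.IsCycle ∧ d.length = c.length ∧ s(x, y) ∈ d.edges :=
      ⟨c.rotate x hx, hc.rotate hx, by simp, (c.rotate_edges x hx).mem_iff.2 he⟩
    rw [← hdlen]
    rcases eq_or_ne d.snd y with hsnd | hsnd
    · exact hd.exists_isPath_of_snd_eq hsnd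
    · rw [← d.cons_tail_eq hd.not_nil, edges_cons, List.mem_cons, Sym2.congr_right] at hed
      have hy : d.reverse.snd = y := by
        have := hd.three_le_length
        have hpen := hd.isPath_tail.eq_penultimate_of_mem_edges (hed.resolve_left hsnd.symm)
        refine (snd_reverse d).trans (Eq.trans ?_ hpen.symm)
        simp only [penultimate, getVert_tail, length_tail]
        congr 1
        omega
      simpa using hd.reverse.exists_isPath_of_snd_eq hy
  · refine absurd ((hasCopy_cycleGraph_iff hk).2
      ⟨v, c.transfer G fun e he' => ?_, hc.transfer _, by simp⟩) hfree
    have := c.edges_subset_edgeSet he'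
    rw [edgeSet_sup, edgeSet_fromEdgeSet] at this
    rcases this with h | ⟨rfl, -⟩
    · exact h
    · exact absurd he' he

theorem IsSat.exists_isPath {k : ℕ} (hsat : IsSat (cycleGraph k) G) (hk : 2 < k) {x y : V}
    (hxy : x ≠ y) (hadj : ¬ G.Adj x y) : ∃ p : G.Walk x y, p.IsPath ∧ p.length + 1 = k :=
  exists_isPath_of_hasCopy_cycleGraph_sup_edge hk hsat.1 (hsat.2 x y hxy hadj)

namespace Walk

variable {u v : V}

theorem IsPath.eq_or_eq_of_adj_getVert_succ {p : G.Walk u v} (hp : p.IsPath)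
    (hdeg : ∀ x ∈ p.support, (G.neighborSet x).ncard = 2) {i : ℕ} (hi : i + 2 ≤ p.length)
    {z : V} (hz : G.Adj (p.getVert (i + 1)) z) : z = p.getVert i ∨ z = p.getVert (i + 2) :=
  eq_or_eq_of_ncard_neighborSet_eq_two (hdeg _ (p.getVert_mem_support _))
    (p.adj_getVert_succ (by omega)).symm (p.adj_getVert_succ (by omega))
    (fun h => by have := (hp.getVert_eq_getVert_iff (by omega) hi).1 h; omega) hz

theorem IsPath.getVert_eq_of_snd_eq {d : V} {P : G.Walk u v} (hP : P.IsPath)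
    (hdeg : ∀ x ∈ P.support, (G.neighborSet x).ncard = 2) {W : G.Walk u d} (hW : W.IsPath)
    (hd : d ∉ P.support) (hsnd : W.snd = P.snd) {i : ℕ} (hi : i ≤ P.length) :
    W.getVert i = P.getVert i := by
  induction i using Nat.strong_induction_on with
  | _ i ih =>
    match i, hi with
    | 0, _ => simp
    | 1, _ => exact hsnd
    | i + 2, hi =>
      have h0 := ih i (by omega) (by omega)
      have h1 := ih (i + 1) (by omega) (by omega)
      have hlt : i + 1 < W.length := by
        by_contra! hle
        exact hd (W.getVert_of_length_le hle ▸ h1 ▸ P.getVert_mem_support _)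
      rcases hP.eq_or_eq_of_adj_getVert_succ hdeg hi (h1 ▸ W.adj_getVert_succ hlt) with h | h
      · have := (hW.getVert_eq_getVert_iff (by omega) (by omega)).1 (h.trans h0.symm)
        omega
      · exact h

theorem IsPath.length_eq_two_of_mem_support {x y z : V} {W : G.Walk x y} (hW : W.IsPath)
    (hN : ∀ t, G.Adj z t → t = x ∨ t = y) (hz : z ∈ W.support) (hzx : z ≠ x) (hzy : z ≠ y) :
    W.length = 2 := by
  obtain ⟨i, rfl, hi⟩ := mem_support_iff_exists_getVert.1 hz
  have hend : ∀ n ≤ W.length, W.getVert n = x ∨ W.getVert n = y → n = 0 ∨ n = W.length := by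
    rintro n hn (h | h)
    · exact .inl ((hW.getVert_eq_getVert_iff hn (Nat.zero_le _)).1 (h.trans W.getVert_zero.symm))
    · exact .inr ((hW.getVert_eq_getVert_iff hn le_rfl).1 (h.trans W.getVert_length.symm))
  have h0 : i ≠ 0 := by rintro rfl; exact hzx W.getVert_zero
  have hL : i ≠ W.length := by rintro rfl; exact hzy W.getVert_length
  obtain ⟨j, rfl⟩ : ∃ j, i = j + 1 := ⟨i - 1, by omega⟩
  have h1 := hend j (by omega) (hN _ (W.adj_getVert_succ (by omega)).symm)
  have h2 := hend (j + 2) (by omega) (hN _ (W.adj_getVert_succ (by omega)))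
  omega

theorem IsPath.notMem_support_of_adj_start {w z : V} {P : G.Walk u v} (hP : P.IsPath)
    (hlen : 2 ≤ P.length) (hdeg : ∀ x ∈ P.support, (G.neighborSet x).ncard = 2)
    (hwu : G.Adj w u) (hwz : G.Adj w z) (hz : z ∉ P.support) : w ∉ P.support := by
  intro hw
  obtain ⟨i, rfl, hi⟩ := mem_support_iff_exists_getVert.1 hw
  apply hz
  rcases Nat.lt_or_ge i P.length with hlt | hge
  · obtain ⟨j, rfl⟩ : ∃ j, i = j + 1 := ⟨i - 1, by
      have : i ≠ 0 := by rintro rfl; simp at hwu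
      omega⟩
    rcases hP.eq_or_eq_of_adj_getVert_succ hdeg (by omega) hwz with rfl | rfl <;>
      exact P.getVert_mem_support _
  · obtain rfl : i = P.length := by omega
    rw [P.getVert_length] at hwu hwz
    have hne : P.penultimate ≠ u := fun h => by
      have := (hP.getVert_eq_getVert_iff (by omega) (Nat.zero_le _)).1 (h.trans P.getVert_zero.symm)
      omega
    rcases eq_or_eq_of_ncard_neighborSet_eq_two (hdeg _ P.end_mem_support)
      (P.adj_penultimate (not_nil_iff_lt_length.2 (by omega))).symm hwu hne hwz with rfl | rfl
    · exact P.getVert_mem_support _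
    · exact P.start_mem_support

theorem IsPath.hasCopy_cycleGraph_of_adj_snd {x y z : V} {S : G.Walk x y} (hS : S.IsPath)
    (hlen : 4 ≤ S.length) (hyz : G.Adj y z) (hzs : G.Adj z S.snd)
    (hN : ∀ t, G.Adj z t → t = S.snd ∨ t = y) : HasCopy (cycleGraph (S.length + 1)) G := by
  have hz : z ∉ S.tail.support := fun hz => by
    have := hS.tail.length_eq_two_of_mem_support hN hz (G.ne_of_adj hzs) (G.ne_of_adj hyz).symm
    rw [length_tail] at this
    omega
  have h := (hS.tail.concat hz hyz).hasCopy_cycleGraph_of_adj (by simp; omega) hzs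
  rwa [length_concat, length_tail, Nat.sub_add_cancel (by omega)] at h

end Walk

open Walk

/-- The hypotheses of the theorem, with the cycle length written as `k = m + 7`. -/
structure ThreadPair (G : SimpleGraph V) (m : ℕ) (w : V) {u₀ u' v₀ v' : V}
    (p : G.Walk u₀ u') (q : G.Walk v₀ v') : Prop where
  isPath_left : p.IsPath
  isPath_right : q.IsPath
  length_left : p.length = m + 3
  length_right : q.length = m + 3
  disjoint : ∀ v ∈ p.support, v ∉ q.support
  ncard_left : ∀ v ∈ p.support, (G.neighborSet v).ncard = 2
  ncard_right : ∀ v ∈ q.support, (G.neighborSet v).ncard = 2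
  adj_left : G.Adj w u₀
  adj_right : G.Adj w v₀

namespace ThreadPair

variable {m : ℕ} {u₀ u' v₀ v' w : V} {p : G.Walk u₀ u'} {q : G.Walk v₀ v'}

theorem symm (h : ThreadPair G m w p q) : ThreadPair G m w q p :=
  ⟨h.isPath_right, h.isPath_left, h.length_right, h.length_left,
    fun v hq hp => h.disjoint v hp hq, h.ncard_right, h.ncard_left, h.adj_right, h.adj_left⟩

theorem notMem_left (h : ThreadPair G m w p q) : w ∉ p.support :=
  h.isPath_left.notMem_support_of_adj_start (by rw [h.length_left]; omega) h.ncard_left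
    h.adj_left h.adj_right (fun hv => h.disjoint _ hv q.start_mem_support)

theorem eq_or_eq_of_adj_start (h : ThreadPair G m w p q) {z : V} (hz : G.Adj u₀ z) :
    z = p.snd ∨ z = w :=
  eq_or_eq_of_ncard_neighborSet_eq_two (h.ncard_left _ p.start_mem_support)
    (p.adj_snd (not_nil_iff_lt_length.2 (by rw [h.length_left]; omega))) h.adj_left.symm
    (fun e => h.notMem_left (e ▸ p.getVert_mem_support 1)) hz

theorem snd_eq_or_reverse_snd_eq (h : ThreadPair G m w p q) {R : G.Walk u₀ v₀} (hR : R.IsPath)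
    (hRlen : 3 ≤ R.length) : R.snd = p.snd ∨ R.reverse.snd = q.snd := by
  rcases h.eq_or_eq_of_adj_start (R.adj_snd (not_nil_iff_lt_length.2 (by omega))) with hR1 | hR1
  · exact .inl hR1
  refine .inr ((h.symm.eq_or_eq_of_adj_start ?_).resolve_right fun e => ?_)
  · rw [snd_reverse]
    exact (R.adj_penultimate (not_nil_iff_lt_length.2 (by omega))).symm
  · rw [snd_reverse, ← hR1] at e
    have := (hR.getVert_eq_getVert_iff (by omega) (by omega)).1 e
    omega

theorem exists_adj_end_of_isPath_snd_eq (h : ThreadPair G m w p q) {R : G.Walk u₀ v₀}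
    (hR : R.IsPath) (hRlen : R.length = m + 6) (hR1 : R.snd = p.snd) :
    ∃ a, a ≠ w ∧ a ≠ p.getVert (m + 2) ∧ G.Adj u' a ∧ G.Adj a w := by
  have hRp : ∀ i ≤ m + 3, R.getVert i = p.getVert i := fun i hi =>
    h.isPath_left.getVert_eq_of_snd_eq h.ncard_left hR
      (fun hv => h.disjoint _ hv q.start_mem_support) hR1 (h.length_left ▸ hi)
  have hRu' : R.getVert (m + 3) = u' := (hRp _ le_rfl).trans (h.length_left ▸ p.getVert_length)
  have hRinj : ∀ i j, i ≤ m + 6 → j ≤ m + 6 → R.getVert i = R.getVert j → i = j :=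
    fun i j hi hj => (hR.getVert_eq_getVert_iff (hRlen ▸ hi) (hRlen ▸ hj)).1
  have hpen : G.Adj v₀ (R.getVert (m + 5)) := by
    have := R.adj_getVert_succ (i := m + 5) (by omega)
    rw [R.getVert_of_length_le (show R.length ≤ m + 5 + 1 by omega)] at this
    exact this.symm
  rcases h.symm.eq_or_eq_of_adj_start hpen with hq1 | hw
  · have hrev : R.reverse.snd = q.snd := by
      rw [snd_reverse, penultimate, hRlen]
      exact hq1
    have h3 := h.symm.isPath_left.getVert_eq_of_snd_eq h.symm.ncard_left hR.reverse
      (fun hu => h.disjoint _ p.start_mem_support hu) hrev (i := 3) (by rw [h.length_right]; omega)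
    rw [getVert_reverse, hRlen, show m + 6 - 3 = m + 3 by omega, hRu'] at h3
    exact (h.disjoint _ p.end_mem_support (h3 ▸ q.getVert_mem_support 3)).elim
  · refine ⟨R.getVert (m + 4), fun e => ?_, fun e => ?_, hRu' ▸ R.adj_getVert_succ (by omega),
      hw ▸ R.adj_getVert_succ (by omega)⟩
    · have := hRinj _ _ (by omega) (by omega) (e.trans hw.symm)
      omega
    · have := hRinj _ _ (by omega) (by omega) (e.trans (hRp _ (by omega)).symm)
      omega

theorem false_of_adj_end_of_isPath_snd_eq (h : ThreadPair G m w p q) {a : V} (haw : a ≠ w)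
    (hap : a ≠ p.getVert (m + 2)) (hua : G.Adj u' a) (haw' : G.Adj a w) {S : G.Walk u₀ q.snd}
    (hS : S.IsPath) (hSlen : S.length = m + 6) (hS1 : S.snd = p.snd) : False := by
  have hSp : ∀ i ≤ m + 3, S.getVert i = p.getVert i := fun i hi =>
    h.isPath_left.getVert_eq_of_snd_eq h.ncard_left hS
      (fun hv => h.disjoint _ hv (q.getVert_mem_support 1)) hS1 (h.length_left ▸ hi)
  have hSinj : ∀ i j, i ≤ m + 6 → j ≤ m + 6 → S.getVert i = S.getVert j → i = j :=
    fun i j hi hj => (hS.getVert_eq_getVert_iff (hSlen ▸ hi) (hSlen ▸ hj)).1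
  have hpu' : p.getVert (m + 3) = u' := h.length_left ▸ p.getVert_length
  have hSa : S.getVert (m + 4) = a := by
    have hadj : G.Adj u' (S.getVert (m + 4)) :=
      hpu' ▸ hSp (m + 3) le_rfl ▸ S.adj_getVert_succ (by omega)
    have hpen : G.Adj (p.getVert (m + 3)) (p.getVert (m + 2)) :=
      (p.adj_getVert_succ (by rw [h.length_left]; omega)).symm
    rw [hpu'] at hpen
    rcases eq_or_eq_of_ncard_neighborSet_eq_two (h.ncard_left _ p.end_mem_support)
      hpen hua hap.symm hadj with e | e
    · have := hSinj _ _ (by omega) (by omega) (e.trans (hSp (m + 2) (by omega)).symm)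
      omega
    · exact e
  -- So `S = u₀ ⋯ u_{m+3} a S_{m+5} v₁`, where `S_{m+5}` is `v₀` or `v₂`.
  have hend : S.getVert (m + 6) = q.snd := S.getVert_of_length_le hSlen.le
  have hq : G.Adj (S.getVert (m + 6)) (S.getVert (m + 5)) :=
    (S.adj_getVert_succ (by omega)).symm
  rw [hend] at hq
  have haS : G.Adj a (S.getVert (m + 5)) := hSa ▸ S.adj_getVert_succ (by omega)
  rcases h.isPath_right.eq_or_eq_of_adj_getVert_succ h.ncard_right (i := 0)
    (by rw [h.length_right]; omega) hq with e | e
  · rcases h.symm.eq_or_eq_of_adj_start (q.getVert_zero ▸ e ▸ haS.symm) with e' | e'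
    · have := hSinj _ _ (by omega) (by omega) (hSa.trans (e'.trans hend.symm))
      omega
    · exact haw e'
  · rcases h.isPath_right.eq_or_eq_of_adj_getVert_succ h.ncard_right (i := 1)
      (by rw [h.length_right]; omega) (e ▸ haS.symm) with e' | e'
    · have := hSinj _ _ (by omega) (by omega) (hSa.trans (e'.trans hend.symm))
      omega
    · rcases eq_or_eq_of_ncard_neighborSet_eq_two (h.ncard_right _ (q.getVert_mem_support 3))
        (q.adj_getVert_succ (by rw [h.length_right]; omega)).symm (e' ▸ hua.symm)
        (fun e'' => h.disjoint _ p.end_mem_support (by rw [← e'']; exact q.getVert_mem_support 2))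
        (e' ▸ haw') with e'' | e''
      · exact h.symm.notMem_left (e'' ▸ q.getVert_mem_support 2)
      · exact h.notMem_left (e'' ▸ p.end_mem_support)

theorem false_of_isPath_snd_eq (h : ThreadPair G m w p q) (hsat : IsSat (cycleGraph (m + 7)) G)
    {R : G.Walk u₀ v₀} (hR : R.IsPath) (hRlen : R.length = m + 6) (hR1 : R.snd = p.snd) :
    False := by
  obtain ⟨a, haw, hap, hua, haw'⟩ := h.exists_adj_end_of_isPath_snd_eq hR hRlen hR1
  have hne : u₀ ≠ q.snd := fun e =>
    h.disjoint _ p.start_mem_support (e ▸ q.getVert_mem_support 1)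
  have hnadj : ¬ G.Adj u₀ q.snd := fun hadj => by
    rcases h.eq_or_eq_of_adj_start hadj with e | e
    · exact h.disjoint _ (p.getVert_mem_support 1) (e ▸ q.getVert_mem_support 1 : p.snd ∈ _)
    · exact h.symm.notMem_left (e ▸ q.getVert_mem_support 1)
  obtain ⟨S, hS, hSlen⟩ := hsat.exists_isPath (by omega) hne hnadj
  rcases h.eq_or_eq_of_adj_start (S.adj_snd (not_nil_iff_lt_length.2 (by omega))) with hS1 | hS1
  · exact h.false_of_adj_end_of_isPath_snd_eq haw hap hua haw' hS (by omega) hS1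
  · apply hsat.1
    rw [← hSlen]
    refine hS.hasCopy_cycleGraph_of_adj_snd (by omega)
      (q.adj_snd (not_nil_iff_lt_length.2 (by rw [h.length_right]; omega))).symm
      (hS1 ▸ h.adj_right.symm) fun t ht => ?_
    rw [hS1]
    exact (h.symm.eq_or_eq_of_adj_start ht).symm

end ThreadPair

end SimpleGraph

theorem no_common_neighbor_of_two_long_degree_two_paths_general
    (k : ℕ) (hk : 7 ≤ k) (V : Type) (G : SimpleGraph V)
    (hsat : IsSat (cycleGraph k) G)
    (u₀ u' v₀ v' : V) (p : G.Walk u₀ u') (q : G.Walk v₀ v')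
    (hp : p.IsPath) (hq : q.IsPath)
    (hplen : p.length = k - 4) (hqlen : q.length = k - 4)
    (hdisj : ∀ v ∈ p.support, v ∉ q.support)
    (hpdeg : ∀ v ∈ p.support, (G.neighborSet v).ncard = 2)
    (hqdeg : ∀ v ∈ q.support, (G.neighborSet v).ncard = 2) :
    ¬ ∃ w : V, G.Adj w u₀ ∧ G.Adj w v₀ := by
  rintro ⟨w, hwu, hwv⟩
  obtain ⟨m, rfl⟩ : ∃ m, k = m + 7 := ⟨k - 7, by omega⟩
  have h : ThreadPair G m w p q := ⟨hp, hq, by omega, by omega, hdisj, hpdeg, hqdeg, hwu, hwv⟩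
  have hne : u₀ ≠ v₀ := fun e => hdisj _ p.start_mem_support (e ▸ q.start_mem_support)
  have hnadj : ¬ G.Adj u₀ v₀ := fun hadj => by
    rcases h.eq_or_eq_of_adj_start hadj with e | e
    · exact hdisj _ (p.getVert_mem_support 1) (e ▸ q.start_mem_support)
    · exact hwv.ne e.symm
  obtain ⟨R, hR, hRlen⟩ := hsat.exists_isPath (by omega) hne hnadj
  rcases h.snd_eq_or_reverse_snd_eq hR (by omega) with hR1 | hR1
  · exact h.false_of_isPath_snd_eq hsat hR (by omega) hR1
  · exact h.symm.false_of_isPath_snd_eq hsat hR.reverse (by simp; omega) hR1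

theorem no_common_neighbor_of_two_long_degree_two_paths
    (k : ℕ) (hk : 7 ≤ k) (V : Type) [Fintype V] (G : SimpleGraph V)
    (hsat : IsSat (cycleGraph k) G)
    (u₀ u' v₀ v' : V) (p : G.Walk u₀ u') (q : G.Walk v₀ v')
    (hp : p.IsPath) (hq : q.IsPath)
    (hplen : p.length = k - 4) (hqlen : q.length = k - 4)
    (hdisj : ∀ v ∈ p.support, v ∉ q.support)
    (hpdeg : ∀ v ∈ p.support, (G.neighborSet v).ncard = 2)
    (hqdeg : ∀ v ∈ q.support, (G.neighborSet v).ncard = 2) :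
    ¬ ∃ w : V, G.Adj w u₀ ∧ G.Adj w v₀ :=
  no_common_neighbor_of_two_long_degree_two_paths_general k hk V G hsat u₀ u' v₀ v' p q hp hq hplen
    hqlen hdisj hpdeg hqdeg
end
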